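/- For any element m of a left 𝕆-module M, the submodule generated by m is a finite-dimensional real vector space of dimension at most 128. -/

import Mathlib

noncomputable section

open Quaternion

/-- The octonions, via the Cayley–Dickson construction on the quaternions. -/
def Octonion : Type := ℍ[ℝ] × ℍ[ℝ]

namespace Octonion

instance : AddCommGroup Octonion := inferInstanceAs (AddCommGroup (ℍ[ℝ] × ℍ[ℝ]))
instance : Module ℝ Octonion := inferInstanceAs (Module ℝ (ℍ[ℝ] × ℍ[ℝ]))

instance : One Octonion := ⟨((1 : ℍ[ℝ]), (0 : ℍ[ℝ]))⟩
instance : Mul Octonion :=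
  ⟨fun x y => (x.1 * y.1 - star y.2 * x.2, y.2 * x.1 + x.2 * star y.1)⟩
/-- Octonionic conjugation. -/
instance : Star Octonion := ⟨fun x => (star x.1, -x.2)⟩

/-- The associator `[a,b,c] = (ab)c - a(bc)`. -/
def assoc (a b c : Octonion) : Octonion := a * b * c - a * (b * c)

/-- The standard imaginary units `e 0 = e₁, …, e 6 = e₇`. -/
def e : Fin 7 → Octonion
  | 0 => ((⟨0,1,0,0⟩ : ℍ[ℝ]), 0)
  | 1 => ((⟨0,0,1,0⟩ : ℍ[ℝ]), 0)
  | 2 => ((⟨0,0,0,1⟩ : ℍ[ℝ]), 0)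
  | 3 => (0, (1 : ℍ[ℝ]))
  | 4 => (0, (⟨0,1,0,0⟩ : ℍ[ℝ]))
  | 5 => (0, (⟨0,0,1,0⟩ : ℍ[ℝ]))
  | 6 => (0, (⟨0,0,0,1⟩ : ℍ[ℝ]))

end Octonion

/-- A left `𝕆`-module: a real vector space with an `ℝ`-bilinear octonion action
satisfying `1 • m = m` and the alternating rule. -/
structure LeftOModule (M : Type) [AddCommGroup M] [Module ℝ M] where
  smul : Octonion →ₗ[ℝ] M →ₗ[ℝ] M
  one_smul : ∀ m : M, smul 1 m = m
  alt : ∀ (p q : Octonion) (m : M),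
    smul (p * q) m - smul p (smul q m) = -(smul (q * p) m - smul q (smul p m))

/-- An `𝕆`-bimodule: compatible left and right `𝕆`-module structures with
`[p,q,m] = [q,m,p] = [m,p,q]`.  Here `l p m` is `p * m` and `r p m` is `m * p`. -/
structure OBimodule (M : Type) [AddCommGroup M] [Module ℝ M] where
  l : Octonion →ₗ[ℝ] M →ₗ[ℝ] M
  r : Octonion →ₗ[ℝ] M →ₗ[ℝ] M
  one_l : ∀ m : M, l 1 m = m
  one_r : ∀ m : M, r 1 m = m
  /-- left alternating rule `[p,q,m] = -[q,p,m]` -/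
  alt_l : ∀ (p q : Octonion) (m : M),
    l (p * q) m - l p (l q m) = -(l (q * p) m - l q (l p m))
  /-- right alternating rule `[m,p,q] = -[m,q,p]` -/
  alt_r : ∀ (p q : Octonion) (m : M),
    r q (r p m) - r (p * q) m = -(r p (r q m) - r (q * p) m)
  /-- `[p,q,m] = [q,m,p]` -/
  comp_lm : ∀ (p q : Octonion) (m : M),
    l (p * q) m - l p (l q m) = r p (l q m) - l q (r p m)
  /-- `[p,q,m] = [m,p,q]` -/
  comp_rm : ∀ (p q : Octonion) (m : M),
    l (p * q) m - l p (l q m) = r q (r p m) - r (p * q) m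

/-!
Each `L_{eᵢ}` squares to `-1` (the alternating rule with `p = q` gives `(pp)m = p(pm)`) and two
distinct ones anticommute (the alternating rule with `eᵢeⱼ = -eⱼeᵢ`). Hence `L_{eᵢ}` maps an
ordered monomial `L_{e_{i₁}} ⋯ L_{e_{iₖ}} m`, `i₁ < ⋯ < iₖ`, to `±` another one, so the span of
these `2⁷ = 128` vectors contains `m` and is stable under all of `𝕆 = span {1, e₁, …, e₇}`.
-/

section OrderedProd

variable {A ι : Type*} [Ring A] [LinearOrder ι] (L : ι → A)

def orderedProd (s : Finset ι) : A := ((s.sort).map L).prod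

@[simp]
theorem orderedProd_empty : orderedProd L ∅ = 1 := by
  simp [orderedProd]

theorem orderedProd_singleton (i : ι) : orderedProd L {i} = L i := by
  simp [orderedProd]

theorem orderedProd_insert_of_forall_lt {a : ι} {s : Finset ι} (h : ∀ x ∈ s, a < x) :
    orderedProd L (insert a s) = L a * orderedProd L s := by
  rw [orderedProd, Finset.sort_insert _ (fun x hx => (h x hx).le) fun ha => lt_irrefl a (h a ha),
    List.map_cons, List.prod_cons, orderedProd]

theorem exists_mul_orderedProd_eq_or_eq_neg (hsq : ∀ i, L i * L i = -1)
    (hanti : Pairwise fun i j => L i * L j = -(L j * L i)) (i : ι) (s : Finset ι) :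
    ∃ t ⊆ insert i s,
      L i * orderedProd L s = orderedProd L t ∨ L i * orderedProd L s = -orderedProd L t := by
  induction s using Finset.induction_on_min with
  | empty => exact ⟨{i}, by simp, Or.inl (by simp [orderedProd_singleton])⟩
  | insert a s has ih =>
    rw [orderedProd_insert_of_forall_lt L has]
    rcases lt_trichotomy i a with hia | rfl | hai
    · have hi : ∀ x ∈ insert a s, i < x := by
        simpa [hia] using fun x hx => hia.trans (has x hx)
      refine ⟨insert i (insert a s), subset_rfl, Or.inl ?_⟩
      rw [orderedProd_insert_of_forall_lt L hi, orderedProd_insert_of_forall_lt L has]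
    · refine ⟨s, fun x hx => by simp [hx], Or.inr ?_⟩
      rw [← mul_assoc, hsq, neg_one_mul]
    · obtain ⟨t, hts, ht⟩ := ih
      have hat : ∀ x ∈ t, a < x := fun x hx => by
        rcases Finset.mem_insert.1 (hts hx) with rfl | hx
        · exact hai
        · exact has x hx
      have hsub : insert a t ⊆ insert i (insert a s) := Finset.insert_subset_iff.2
        ⟨by simp, hts.trans (Finset.insert_subset_insert i (Finset.subset_insert a s))⟩
      refine ⟨insert a t, hsub, ?_⟩
      rw [orderedProd_insert_of_forall_lt L hat, ← mul_assoc, hanti hai.ne', neg_mul, mul_assoc]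
      rcases ht with ht | ht
      · exact Or.inr (by rw [ht])
      · exact Or.inl (by rw [ht, mul_neg, neg_neg])

end OrderedProd

section OrderedSpan

variable {R M ι : Type*} [Ring R] [AddCommGroup M] [Module R M] [LinearOrder ι]
  (L : ι → Module.End R M)

def orderedSpan (m : M) : Submodule R M :=
  Submodule.span R (Set.range fun s : Finset ι => orderedProd L s m)

theorem mem_orderedSpan_self (m : M) : m ∈ orderedSpan L m :=
  Submodule.subset_span ⟨∅, by simp⟩

theorem orderedSpan_le_comap (hsq : ∀ i, L i * L i = -1)
    (hanti : Pairwise fun i j => L i * L j = -(L j * L i)) (m : M) (i : ι) :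
    orderedSpan L m ≤ (orderedSpan L m).comap (L i) := by
  rw [orderedSpan, Submodule.span_le]
  rintro _ ⟨s, rfl⟩
  obtain ⟨t, -, ht | ht⟩ := exists_mul_orderedProd_eq_or_eq_neg L hsq hanti i s <;>
    rw [SetLike.mem_coe, Submodule.mem_comap, ← Module.End.mul_apply, ht]
  · exact Submodule.subset_span ⟨t, rfl⟩
  · exact Submodule.neg_mem _ (Submodule.subset_span ⟨t, rfl⟩)

variable [Fintype ι]

instance (m : M) : Module.Finite R (orderedSpan L m) :=
  Module.Finite.span_of_finite R (Set.finite_range _)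

theorem finrank_orderedSpan_le [StrongRankCondition R] (m : M) :
    Module.finrank R (orderedSpan L m) ≤ 2 ^ Fintype.card ι := by
  calc Module.finrank R (orderedSpan L m) ≤ Fintype.card (Finset ι) := finrank_range_le_card _
    _ = 2 ^ Fintype.card ι := Fintype.card_finset

end OrderedSpan

namespace Octonion

@[ext]
theorem ext {x y : Octonion} (h₁ : x.1 = y.1) (h₂ : x.2 = y.2) : x = y :=
  Prod.ext h₁ h₂

@[simp] theorem mul_fst (x y : Octonion) : (x * y).1 = x.1 * y.1 - star y.2 * x.2 := rfl
@[simp] theorem mul_snd (x y : Octonion) : (x * y).2 = y.2 * x.1 + x.2 * star y.1 := rfl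
@[simp] theorem one_fst : (1 : Octonion).1 = 1 := rfl
@[simp] theorem one_snd : (1 : Octonion).2 = 0 := rfl
@[simp] theorem neg_fst (x : Octonion) : (-x).1 = -x.1 := rfl
@[simp] theorem neg_snd (x : Octonion) : (-x).2 = -x.2 := rfl
@[simp] theorem add_fst (x y : Octonion) : (x + y).1 = x.1 + y.1 := rfl
@[simp] theorem add_snd (x y : Octonion) : (x + y).2 = x.2 + y.2 := rfl
@[simp] theorem smul_fst (c : ℝ) (x : Octonion) : (c • x).1 = c • x.1 := rfl
@[simp] theorem smul_snd (c : ℝ) (x : Octonion) : (c • x).2 = c • x.2 := rfl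

-- `simp` must rewrite the quaternion coordinates before unfolding `e`: the literals in `e` have
-- type `QuaternionAlgebra ℝ (-1) 0 (-1)`, on which the `ℍ[ℝ]` lemmas do not fire.
theorem e_mul_self (i : Fin 7) : e i * e i = -1 := by
  fin_cases i <;> ext <;>
    simp [Quaternion.re_mul, Quaternion.imI_mul, Quaternion.imJ_mul, Quaternion.imK_mul] <;>
    simp [e]

theorem e_mul_e_of_lt {i j : Fin 7} (h : i < j) : e i * e j = -(e j * e i) := by
  fin_cases i <;> fin_cases j <;> first | exact absurd h (by decide) | ext <;>
    simp only [mul_fst, mul_snd, neg_fst, neg_snd, Quaternion.re_sub, Quaternion.imI_sub,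
      Quaternion.imJ_sub, Quaternion.imK_sub, Quaternion.re_add, Quaternion.imI_add,
      Quaternion.imJ_add, Quaternion.imK_add, Quaternion.re_neg, Quaternion.imI_neg,
      Quaternion.imJ_neg, Quaternion.imK_neg, Quaternion.re_mul, Quaternion.imI_mul,
      Quaternion.imJ_mul, Quaternion.imK_mul, Quaternion.re_star, Quaternion.imI_star,
      Quaternion.imJ_star, Quaternion.imK_star] <;>
    simp [e]

theorem e_anticomm : Pairwise fun i j => e i * e j = -(e j * e i) := fun _ _ h =>
  h.lt_or_gt.elim e_mul_e_of_lt fun h => neg_eq_iff_eq_neg.1 (e_mul_e_of_lt h).symm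

theorem span_insert_one_range_e : Submodule.span ℝ (insert 1 (Set.range e)) = ⊤ := by
  refine eq_top_iff.2 fun p _ => ?_
  have hp : p = p.1.re • 1 + p.1.imI • e 0 + p.1.imJ • e 1 + p.1.imK • e 2 +
      p.2.re • e 3 + p.2.imI • e 4 + p.2.imJ • e 5 + p.2.imK • e 6 := by
    ext <;> simp <;> simp [e]
  have h1 : (1 : Octonion) ∈ Submodule.span ℝ (insert 1 (Set.range e)) :=
    Submodule.subset_span (Set.mem_insert _ _)
  have he (i : Fin 7) : e i ∈ Submodule.span ℝ (insert 1 (Set.range e)) :=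
    Submodule.subset_span (Set.mem_insert_of_mem _ ⟨i, rfl⟩)
  rw [hp]
  apply_rules [Submodule.add_mem, Submodule.smul_mem]

end Octonion

namespace LeftOModule

open Octonion

variable {M : Type} [AddCommGroup M] [Module ℝ M] (σ : LeftOModule M)

theorem smul_mul_self (p : Octonion) (x : M) :
    σ.smul (p * p) x = σ.smul p (σ.smul p x) := by
  have : IsAddTorsionFree M := .of_isTorsionFree ℝ M
  exact sub_eq_zero.1 (self_eq_neg.1 (σ.alt p p x))

theorem smul_e_mul_self (i : Fin 7) : σ.smul (e i) * σ.smul (e i) = -1 := by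
  ext x
  rw [Module.End.mul_apply, ← smul_mul_self, e_mul_self, map_neg, LinearMap.neg_apply,
    σ.one_smul, LinearMap.neg_apply, Module.End.one_apply]

theorem smul_e_anticomm :
    Pairwise fun i j => σ.smul (e i) * σ.smul (e j) = -(σ.smul (e j) * σ.smul (e i)) := by
  intro i j hij
  ext x
  have h := σ.alt (e i) (e j) x
  rw [e_anticomm hij, map_neg, LinearMap.neg_apply] at h
  simp only [Module.End.mul_apply, LinearMap.neg_apply]
  linear_combination (norm := module) -h

theorem le_comap_smul {S : Submodule ℝ M} (hS : ∀ i, S ≤ S.comap (σ.smul (e i)))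
    (p : Octonion) : S ≤ S.comap (σ.smul p) := by
  have hone : σ.smul 1 ∈ S.compatibleMaps S := by
    rw [show σ.smul 1 = LinearMap.id from LinearMap.ext σ.one_smul]
    exact fun _ hx => hx
  have hspan : Submodule.span ℝ (insert 1 (Set.range e)) ≤ (S.compatibleMaps S).comap σ.smul :=
    Submodule.span_le.2 <| Set.insert_subset hone (Set.range_subset_iff.2 hS)
  exact hspan (span_insert_one_range_e ▸ Submodule.mem_top)

end LeftOModule

open Octonion

/-- The submodule of a left `𝕆`-module generated by a single element is a
finite-dimensional real vector space of dimension at most `128`. -/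
theorem cyclic_submodule_findim {M : Type} [AddCommGroup M] [Module ℝ M]
    (σ : LeftOModule M) (m : M) :
    let N : Submodule ℝ M :=
      sInf {S : Submodule ℝ M | m ∈ S ∧ ∀ p : Octonion, ∀ x ∈ S, σ.smul p x ∈ S}
    FiniteDimensional ℝ N ∧ Module.finrank ℝ N ≤ 128 := by
  intro N
  set L : Fin 7 → Module.End ℝ M := fun i => σ.smul (e i)
  have hstable : ∀ i, orderedSpan L m ≤ (orderedSpan L m).comap (L i) :=
    orderedSpan_le_comap L σ.smul_e_mul_self σ.smul_e_anticomm m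
  have hN : N ≤ orderedSpan L m :=
    sInf_le ⟨mem_orderedSpan_self L m, fun p _ hx => σ.le_comap_smul hstable p hx⟩
  refine ⟨Submodule.finiteDimensional_of_le hN, ?_⟩
  calc Module.finrank ℝ N ≤ Module.finrank ℝ (orderedSpan L m) := Submodule.finrank_mono hN
    _ ≤ 2 ^ Fintype.card (Fin 7) := finrank_orderedSpan_le L m
    _ = 128 := by simp
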